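/- Let d = (d_1, ..., d_n) be a non-increasing sequence of positive integers whose sum is even and at most 2n - 2. If n_1(d) ≥ Σ_{i=1}^{n_{≥2}(d)} d_i, then the minimum domination number over all forest realizations of d equals n_{≥2}(d) + (n_1(d) - Σ_{i=1}^{n_{≥2}(d)} d_i)/2. -/

import Mathlib

open Finset

/-- The degree of a vertex in a simple graph. -/
noncomputable def deg {V : Type*} (G : SimpleGraph V) (v : V) : ℕ := Nat.card {u // G.Adj v u}

/-- `D` is a dominating set of `G`. -/
def DomSet {V : Type*} (G : SimpleGraph V) (D : Set V) : Prop := ∀ v ∉ D, ∃ u ∈ D, G.Adj u v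

/-- `S` is an independent set of `G`. -/
def IndepSet {V : Type*} (G : SimpleGraph V) (S : Set V) : Prop :=
  ∀ u ∈ S, ∀ v ∈ S, ¬ G.Adj u v

/-- The domination number of `G`. -/
noncomputable def domNum {V : Type*} [Fintype V] (G : SimpleGraph V) : ℕ :=
  sInf {k | ∃ D : Finset V, D.card = k ∧ DomSet G ↑D}

/-- The independence number of `G`. -/
noncomputable def indepNum {V : Type*} [Fintype V] (G : SimpleGraph V) : ℕ :=
  sSup {k | ∃ S : Finset V, S.card = k ∧ IndepSet G ↑S}

/-- Sum of the first `k` entries `d_1 + ... + d_k` (0-indexed: indices `< k`). -/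
def psum {n : ℕ} (d : Fin n → ℕ) (k : ℕ) : ℕ := ∑ i : Fin n, if (i : ℕ) < k then d i else 0

/-- Sum of the remaining entries `d_{k+1} + ... + d_n` (0-indexed: indices `≥ k`). -/
def ssum {n : ℕ} (d : Fin n → ℕ) (k : ℕ) : ℕ := ∑ i : Fin n, if k ≤ (i : ℕ) then d i else 0

/-- Slater's bound `sl(d) = min{k ∈ [n] : d_1 + ... + d_k ≥ n - k}`. -/
noncomputable def slater (n : ℕ) (d : Fin n → ℕ) : ℕ := sInf {k | 1 ≤ k ∧ k ≤ n ∧ n - k ≤ psum d k}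

/-- The annihilation number `a(d) = n - min{k ∈ [n] : Σ_{i≤k} d_i ≥ Σ_{i>k} d_i}`. -/
noncomputable def annih (n : ℕ) (d : Fin n → ℕ) : ℕ := n - sInf {k | 1 ≤ k ∧ k ≤ n ∧ ssum d k ≤ psum d k}

/-- The number of entries of `d` equal to `j`. -/
def nCount {n : ℕ} (d : Fin n → ℕ) (j : ℕ) : ℕ := (Finset.univ.filter fun i => d i = j).card

/-- The number of entries of `d` that are at least `2`. -/
def nGe2 {n : ℕ} (d : Fin n → ℕ) : ℕ := (Finset.univ.filter fun i => 2 ≤ d i).card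

/-- `F` is a forest realization of the degree sequence `d`. -/
def IsForestReal {n : ℕ} (d : Fin n → ℕ) (F : SimpleGraph (Fin n)) : Prop :=
  F.IsAcyclic ∧ ∀ i, deg F i = d i

/-- The minimum domination number over all forest realizations of `d`. -/
noncomputable def gammaFmin {n : ℕ} (d : Fin n → ℕ) : ℕ :=
  sInf {m | ∃ F : SimpleGraph (Fin n), IsForestReal d F ∧ domNum F = m}

/-- The maximum independence number over all forest realizations of `d`. -/
noncomputable def alphaFmax {n : ℕ} (d : Fin n → ℕ) : ℕ :=
  sSup {m | ∃ F : SimpleGraph (Fin n), IsForestReal d F ∧ indepNum F = m}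

/-!
Charging each vertex outside a dominating set `D` to an edge joining it to `D` is injective, so
`|D| ≥ n - |E| = n - (∑ d) / 2` for every realization; under the hypotheses this is
`n_{≥2} + (n_1 - ∑_{i ≤ n_{≥2}} d_i) / 2`. The bound is attained by the forest in which each
vertex `i < n_{≥2}` is the centre of a star with `d_i` leaves and the remaining leaves, evenly
many, are paired by a matching: the centres and one end of each matching edge dominate. This
forest is built on `ℕ` from the map sending every vertex to a neighbour (centres to themselves)
and then restricted to `Fin n`.
-/

open SimpleGraph

section Domination

variable {V : Type*}

lemma deg_eq_ncard (G : SimpleGraph V) (v : V) : deg G v = (G.neighborSet v).ncard :=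
  Nat.card_coe_set_eq _

lemma deg_eq_degree (G : SimpleGraph V) [Fintype V] [DecidableRel G.Adj] (v : V) :
    deg G v = G.degree v := by
  rw [deg, ← G.card_neighborSet_eq_degree, ← Nat.card_eq_fintype_card]
  rfl

lemma deg_comap_eq_ncard {W : Type*} (H : SimpleGraph W) (f : V ↪ W) {v : V}
    (h : H.neighborSet (f v) ⊆ Set.range f) :
    deg (H.comap f) v = (H.neighborSet (f v)).ncard := by
  rw [deg_eq_ncard, ← Set.ncard_image_of_injective _ f.injective]
  congr 1
  ext w
  constructor
  · rintro ⟨u, hu, rfl⟩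
    exact hu
  · intro hw
    obtain ⟨u, rfl⟩ := h hw
    exact ⟨u, hw, rfl⟩

variable [Fintype V] {G : SimpleGraph V}

lemma domNum_le_card {D : Finset V} (hD : DomSet G D) : domNum G ≤ D.card :=
  Nat.sInf_le ⟨D, rfl, hD⟩

lemma le_domNum {m : ℕ} (h : ∀ D : Finset V, DomSet G D → m ≤ D.card) : m ≤ domNum G :=
  le_csInf ⟨_, univ, rfl, fun v hv => absurd (mem_coe.2 (mem_univ v)) hv⟩
    (by rintro _ ⟨D, rfl, hD⟩; exact h D hD)

lemma card_le_card_add_card_edgeFinset [DecidableEq V] [Fintype G.edgeSet] {D : Finset V}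
    (hD : DomSet G D) : Fintype.card V ≤ D.card + G.edgeFinset.card := by
  choose! u hu hadj using hD
  have hcharge : Dᶜ.card ≤ G.edgeFinset.card := by
    refine card_le_card_of_injOn (fun v => s(u v, v)) (fun v hv => ?_) (fun v hv w hw h => ?_)
    · simpa using hadj v (by simpa using hv)
    · simp only [coe_compl, Set.mem_compl_iff, mem_coe] at hv hw
      rcases Sym2.eq_iff.1 h with ⟨-, h⟩ | ⟨-, h⟩
      · exact h
      · exact absurd (h ▸ hu w hw) hv
  rw [card_compl] at hcharge
  have := D.card_le_univ
  omega

lemma card_sub_half_sum_le_domNum {d : V → ℕ} (hG : ∀ v, deg G v = d v) :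
    Fintype.card V - (∑ v, d v) / 2 ≤ domNum G := by
  classical
  refine le_domNum fun D hD => ?_
  have hsum : ∑ v, d v = 2 * G.edgeFinset.card := by
    simp_rw [← hG, deg_eq_degree]
    exact G.sum_degrees_eq_twice_card_edges
  have := card_le_card_add_card_edgeFinset hD
  omega

end Domination

lemma gammaFmin_eq_of_le {n m : ℕ} {d : Fin n → ℕ} {F : SimpleGraph (Fin n)}
    (hlow : ∀ F, IsForestReal d F → m ≤ domNum F) (hF : IsForestReal d F)
    (hFm : domNum F ≤ m) :
    gammaFmin d = m :=
  le_antisymm (Nat.sInf_le ⟨F, hF, hFm.antisymm (hlow F hF)⟩)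
    (le_csInf ⟨_, F, hF, rfl⟩ (by rintro _ ⟨F', hF', rfl⟩; exact hlow F' hF'))

lemma SimpleGraph.isAcyclic_of_forall_adj_subsingleton {V : Type*} {G : SimpleGraph V}
    (h : ∀ u v, G.Adj u v → (G.neighborSet u).Subsingleton ∨ (G.neighborSet v).Subsingleton) :
    G.IsAcyclic := by
  intro u c hc
  have hbranch : ∀ w ∈ c.support, ¬ (G.neighborSet w).Subsingleton := by
    intro w hw hsub
    obtain ⟨x, y, hxy, hset⟩ := Set.ncard_eq_two.1 (hc.ncard_neighborSet_toSubgraph_eq_two hw)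
    have hsubset := c.toSubgraph.neighborSet_subset w
    rw [hset] at hsubset
    exact hxy (hsub (hsubset (by simp)) (hsubset (by simp)))
  rcases h u c.snd (c.adj_snd hc.not_nil) with h | h
  · exact hbranch u c.start_mem_support h
  · exact hbranch _ (c.getVert_mem_support 1) h

section GraphOfMap

variable {V : Type*} {p : V → V} {C : Set V}

def graphOfMap (p : V → V) : SimpleGraph V := SimpleGraph.fromRel fun u v => p u = v

lemma graphOfMap_adj {u v : V} : (graphOfMap p).Adj u v ↔ u ≠ v ∧ (p u = v ∨ p v = u) :=
  fromRel_adj _ _ _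

lemma graphOfMap_adj_of_fixed {c v : V} (hc : p c = c) :
    (graphOfMap p).Adj c v ↔ v ≠ c ∧ p v = c := by
  rw [graphOfMap_adj, hc]
  constructor
  · rintro ⟨hne, h | h⟩
    exacts [absurd h hne, ⟨Ne.symm hne, h⟩]
  · rintro ⟨hne, h⟩
    exact ⟨Ne.symm hne, Or.inr h⟩

lemma graphOfMap_neighborSet_of_notMem (hfix : ∀ c ∈ C, p c = c)
    (hmove : ∀ v ∉ C, p v ≠ v)
    (hinv : ∀ v ∉ C, p v ∉ C → p (p v) = v) {v : V} (hv : v ∉ C) :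
    (graphOfMap p).neighborSet v = {p v} := by
  ext u
  rw [mem_neighborSet, graphOfMap_adj, Set.mem_singleton_iff]
  constructor
  · rintro ⟨hne, h | h⟩
    · exact h.symm
    · by_cases hu : u ∈ C
      · exact absurd ((hfix u hu).symm.trans h) hne.symm
      · rw [← h, hinv u hu (h ▸ hv)]
  · rintro rfl
    exact ⟨(hmove v hv).symm, Or.inl rfl⟩

/-- Every edge has an endpoint outside `C`, and such an endpoint is a leaf. -/
lemma graphOfMap_isAcyclic (hfix : ∀ c ∈ C, p c = c) (hmove : ∀ v ∉ C, p v ≠ v)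
    (hinv : ∀ v ∉ C, p v ∉ C → p (p v) = v) : (graphOfMap p).IsAcyclic := by
  refine isAcyclic_of_forall_adj_subsingleton fun u v huv => ?_
  have hleaf {w : V} (hw : w ∉ C) : ((graphOfMap p).neighborSet w).Subsingleton := by
    rw [graphOfMap_neighborSet_of_notMem hfix hmove hinv hw]
    exact Set.subsingleton_singleton
  by_cases hu : u ∈ C
  · by_cases hv : v ∈ C
    · exact absurd ((graphOfMap_adj_of_fixed (hfix u hu)).1 huv).2 (by rw [hfix v hv]; exact huv.ne.symm)
    · exact Or.inr (hleaf hv)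
  · exact Or.inl (hleaf hu)

end GraphOfMap

section DegreeSequence

variable {n : ℕ} {d : Fin n → ℕ}

lemma psum_zero (d : Fin n → ℕ) : psum d 0 = 0 := by
  simp [psum]

lemma psum_mono (d : Fin n → ℕ) : Monotone (psum d) := fun a b hab =>
  sum_le_sum fun i _ => by split_ifs <;> omega

lemma psum_succ (d : Fin n → ℕ) (j : Fin n) : psum d (j + 1) = psum d j + d j := by
  simp only [psum, ← sum_filter]
  rw [show univ.filter (fun i : Fin n => (i : ℕ) < j + 1)
      = insert j (univ.filter fun i : Fin n => (i : ℕ) < j) by ext i; simp [Fin.ext_iff]; omega,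
    sum_insert (by simp), add_comm]

lemma lt_nGe2_iff (hd : Antitone d) (i : Fin n) : (i : ℕ) < nGe2 d ↔ 2 ≤ d i := by
  constructor
  · intro hi
    by_contra hdi
    have hsub : univ.filter (fun j => 2 ≤ d j) ⊆ Iio i := fun j hj => by
      simp only [mem_filter, mem_univ, true_and, mem_Iio] at hj ⊢
      by_contra! hij
      have := hd hij
      omega
    have := card_le_card hsub
    rw [Fin.card_Iio] at this
    exact absurd hi (not_lt.2 this)
  · intro hdi
    have hsub : Iic i ⊆ univ.filter (fun j => 2 ≤ d j) := fun j hj => by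
      simp only [mem_filter, mem_univ, true_and, mem_Iic] at hj ⊢
      have := hd hj
      omega
    have := card_le_card hsub
    rw [Fin.card_Iic] at this
    exact this

lemma eq_one_of_nGe2_le (hd : Antitone d) (hpos : ∀ i, 1 ≤ d i) {i : Fin n}
    (hi : nGe2 d ≤ i) : d i = 1 := by
  have := (lt_nGe2_iff hd i).not.1 (not_lt.2 hi)
  have := hpos i
  omega

lemma nCount_one_eq (hpos : ∀ i, 1 ≤ d i) :
    nCount d 1 = (univ.filter fun i => ¬ 2 ≤ d i).card := by
  unfold nCount
  congr 1
  exact filter_congr fun i _ => by have := hpos i; omega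

lemma nGe2_add_nCount_one (hpos : ∀ i, 1 ≤ d i) : nGe2 d + nCount d 1 = n := by
  rw [nCount_one_eq hpos, nGe2, card_filter_add_card_filter_not, card_univ, Fintype.card_fin]

lemma sum_eq_psum_nGe2_add_nCount_one (hd : Antitone d) (hpos : ∀ i, 1 ≤ d i) :
    ∑ i, d i = psum d (nGe2 d) + nCount d 1 := by
  rw [← sum_filter_add_sum_filter_not univ fun i => 2 ≤ d i, nCount_one_eq hpos,
    card_eq_sum_ones, psum, ← sum_filter]
  congr 1
  · exact sum_congr (filter_congr fun i _ => (lt_nGe2_iff hd i).symm) fun _ _ => rfl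
  · exact sum_congr rfl fun i hi => by have := hpos i; simp at hi; omega

end DegreeSequence

section StarMatching

variable {s : ℕ → ℕ} {k : ℕ}

noncomputable def blockIndex (s : ℕ → ℕ) (t : ℕ) : ℕ := sInf {i | t < s (i + 1)}

lemma exists_block {t m : ℕ} (h0 : s 0 ≤ t) (ht : t < s m) :
    ∃ i < m, s i ≤ t ∧ t < s (i + 1) := by
  induction m with
  | zero => omega
  | succ m ih =>
    by_cases hm : t < s m
    · obtain ⟨i, hi, h⟩ := ih hm
      exact ⟨i, by omega, h⟩
    · exact ⟨m, by omega, by omega, ht⟩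

lemma blockIndex_eq (hs : Monotone s) {t i : ℕ} (h1 : s i ≤ t) (h2 : t < s (i + 1)) :
    blockIndex s t = i := by
  have hle : blockIndex s t ≤ i := Nat.sInf_le h2
  refine hle.antisymm (not_lt.1 fun hlt => ?_)
  have hmem : t < s (blockIndex s t + 1) := Nat.sInf_mem (s := {i | t < s (i + 1)}) ⟨i, h2⟩
  have := hs (show blockIndex s t + 1 ≤ i by omega)
  omega

lemma blockIndex_spec (hs : Monotone s) {t m : ℕ} (h0 : s 0 ≤ t) (ht : t < s m) :
    blockIndex s t < m ∧ s (blockIndex s t) ≤ t ∧ t < s (blockIndex s t + 1) := by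
  obtain ⟨i, hi, h1, h2⟩ := exists_block h0 ht
  rw [blockIndex_eq hs h1 h2]
  exact ⟨hi, h1, h2⟩

noncomputable def starMatchingParent (k : ℕ) (s : ℕ → ℕ) (j : ℕ) : ℕ :=
  if j < k then j
  else if j < k + s k then blockIndex s (j - k)
  else if (j - (k + s k)) % 2 = 0 then j + 1 else j - 1

local notation "p" => starMatchingParent k s

lemma starMatchingParent_of_lt {j : ℕ} (hj : j < k) : p j = j := if_pos hj

lemma starMatchingParent_of_star {j : ℕ} (h1 : k ≤ j) (h2 : j < k + s k) :
    p j = blockIndex s (j - k) := by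
  rw [starMatchingParent, if_neg (by omega), if_pos h2]

lemma starMatchingParent_star_spec (hs : Monotone s) (hs0 : s 0 = 0) {j : ℕ} (h1 : k ≤ j)
    (h2 : j < k + s k) : p j < k ∧ k + s (p j) ≤ j ∧ j < k + s (p j + 1) := by
  rw [starMatchingParent_of_star h1 h2]
  have := blockIndex_spec hs (t := j - k) (by omega) (show j - k < s k by omega)
  omega

lemma starMatchingParent_of_matching {j : ℕ} (h : k + s k ≤ j) :
    p j = if (j - (k + s k)) % 2 = 0 then j + 1 else j - 1 := by
  rw [starMatchingParent, if_neg (by omega), if_neg (by omega)]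

lemma starMatchingParent_ne (hs : Monotone s) (hs0 : s 0 = 0) {j : ℕ} (hj : k ≤ j) :
    p j ≠ j := by
  by_cases h2 : j < k + s k
  · have := starMatchingParent_star_spec hs hs0 hj h2
    omega
  · rw [starMatchingParent_of_matching (not_lt.1 h2)]
    split_ifs <;> omega

lemma starMatchingParent_parent (hs : Monotone s) (hs0 : s 0 = 0) {j : ℕ} (hj : k ≤ j)
    (hpj : k ≤ p j) : p (p j) = j := by
  by_cases h2 : j < k + s k
  · exact absurd hpj (not_le.2 (starMatchingParent_star_spec hs hs0 hj h2).1)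
  · rw [starMatchingParent_of_matching (not_lt.1 h2)] at hpj ⊢
    split_ifs with he
    · rw [starMatchingParent_of_matching (by omega), if_neg (by omega)]
      omega
    · rw [starMatchingParent_of_matching (by omega), if_pos (by omega)]
      omega

lemma starMatchingParent_lt (hs : Monotone s) (hs0 : s 0 = 0) {n j : ℕ} (hn : k + s k ≤ n)
    (hpar : (n - (k + s k)) % 2 = 0) (hj : j < n) : p j < n := by
  by_cases h1 : j < k
  · rwa [starMatchingParent_of_lt h1]
  by_cases h2 : j < k + s k
  · have := starMatchingParent_star_spec hs hs0 (not_lt.1 h1) h2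
    omega
  · rw [starMatchingParent_of_matching (not_lt.1 h2)]
    split_ifs <;> omega

lemma starMatching_neighborSet_of_lt (hs : Monotone s) (hs0 : s 0 = 0) {i : ℕ} (hi : i < k) :
    (graphOfMap p).neighborSet i = Set.Ico (k + s i) (k + s (i + 1)) := by
  ext v
  rw [mem_neighborSet, graphOfMap_adj_of_fixed (starMatchingParent_of_lt hi), Set.mem_Ico]
  have hsi := hs (show i + 1 ≤ k by omega)
  by_cases h1 : v < k
  · rw [starMatchingParent_of_lt h1]
    omega
  by_cases h2 : v < k + s k
  · have hv := starMatchingParent_star_spec hs hs0 (not_lt.1 h1) h2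
    constructor
    · rintro ⟨-, rfl⟩
      exact hv.2
    · rintro ⟨hv1, hv2⟩
      rw [starMatchingParent_of_star (not_lt.1 h1) h2]
      exact ⟨by omega, blockIndex_eq hs (by omega) (by omega)⟩
  · rw [starMatchingParent_of_matching (not_lt.1 h2)]
    split_ifs <;> omega

lemma starMatching_neighborSet_of_le (hs : Monotone s) (hs0 : s 0 = 0) {j : ℕ} (hj : k ≤ j) :
    (graphOfMap p).neighborSet j = {p j} :=
  graphOfMap_neighborSet_of_notMem (C := Set.Iio k) (fun _ => starMatchingParent_of_lt)
    (fun _ hv => starMatchingParent_ne hs hs0 (not_lt.1 hv))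
    (fun _ hv hpv => starMatchingParent_parent hs hs0 (not_lt.1 hv) (not_lt.1 hpv))
    (not_lt.2 hj)

lemma starMatching_isAcyclic (hs : Monotone s) (hs0 : s 0 = 0) : (graphOfMap p).IsAcyclic :=
  graphOfMap_isAcyclic (C := Set.Iio k) (fun _ => starMatchingParent_of_lt)
    (fun _ hv => starMatchingParent_ne hs hs0 (not_lt.1 hv))
    (fun _ hv hpv => starMatchingParent_parent hs hs0 (not_lt.1 hv) (not_lt.1 hpv))

def starMatchingDomSet (k : ℕ) (s : ℕ → ℕ) (n : ℕ) : Finset ℕ :=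
  range k ∪ (range ((n - (k + s k)) / 2)).image (k + s k + 2 * ·)

lemma card_starMatchingDomSet (n : ℕ) :
    (starMatchingDomSet k s n).card = k + (n - (k + s k)) / 2 := by
  rw [starMatchingDomSet, card_union_of_disjoint, card_range,
    card_image_of_injective _ fun a b h => by simpa using h, card_range]
  exact disjoint_left.2 fun a ha hb => by simp only [mem_range, mem_image] at ha hb; omega

lemma lt_of_mem_starMatchingDomSet {n : ℕ} (hn : k + s k ≤ n) {m : ℕ}
    (hm : m ∈ starMatchingDomSet k s n) : m < n := by
  simp only [starMatchingDomSet, mem_union, mem_range, mem_image] at hm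
  omega

lemma starMatchingDomSet_dominates (hs : Monotone s) (hs0 : s 0 = 0) {n v : ℕ}
    (hpar : (n - (k + s k)) % 2 = 0) (hv : v < n) (hvD : v ∉ starMatchingDomSet k s n) :
    ∃ u ∈ starMatchingDomSet k s n, (graphOfMap p).Adj u v := by
  simp only [starMatchingDomSet, mem_union, mem_range, mem_image, not_or, not_exists,
    not_and] at hvD
  have hk : k ≤ v := not_lt.1 hvD.1
  have hadj : (graphOfMap p).Adj v (p v) := by
    rw [← mem_neighborSet, starMatching_neighborSet_of_le hs hs0 hk]
    rfl
  refine ⟨p v, ?_, hadj.symm⟩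
  simp only [starMatchingDomSet, mem_union, mem_range, mem_image]
  by_cases h2 : v < k + s k
  · exact Or.inl (starMatchingParent_star_spec hs hs0 hk h2).1
  · rw [starMatchingParent_of_matching (not_lt.1 h2)]
    have := hvD.2 ((v - (k + s k)) / 2)
    split_ifs
    · omega
    · exact Or.inr ⟨(v - 1 - (k + s k)) / 2, by omega, by omega⟩

end StarMatching

lemma exists_isForestReal_domNum_le {n : ℕ} {d : Fin n → ℕ} (hd : Antitone d)
    (hpos : ∀ i, 1 ≤ d i) (hn : nGe2 d + psum d (nGe2 d) ≤ n)
    (hpar : (n - (nGe2 d + psum d (nGe2 d))) % 2 = 0) :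
    ∃ F, IsForestReal d F ∧ domNum F ≤ nGe2 d + (n - (nGe2 d + psum d (nGe2 d))) / 2 := by
  set k := nGe2 d
  set H := graphOfMap (starMatchingParent k (psum d))
  let f : Fin n ↪ ℕ := Fin.valEmbedding
  have hs := psum_mono d
  have hs0 := psum_zero d
  have hclosed (i : Fin n) : H.neighborSet (f i) ⊆ Set.range f := by
    change H.neighborSet i ⊆ Set.range Fin.val
    rw [Fin.range_val]
    by_cases hi : (i : ℕ) < k
    · rw [starMatching_neighborSet_of_lt hs hs0 hi]
      have := hs (show (i : ℕ) + 1 ≤ k by omega)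
      exact fun v hv => by simp only [Set.mem_Ico, Set.mem_Iio] at hv ⊢; omega
    · rw [starMatching_neighborSet_of_le hs hs0 (not_lt.1 hi), Set.singleton_subset_iff]
      exact starMatchingParent_lt hs hs0 hn hpar i.isLt
  have hdeg (i : Fin n) : deg (H.comap f) i = d i := by
    rw [deg_comap_eq_ncard _ _ (hclosed i), Fin.valEmbedding_apply]
    by_cases hi : (i : ℕ) < k
    · rw [starMatching_neighborSet_of_lt hs hs0 hi, Set.ncard_Ico_nat, psum_succ]
      omega
    · rw [starMatching_neighborSet_of_le hs hs0 (not_lt.1 hi), Set.ncard_singleton,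
        eq_one_of_nGe2_le hd hpos (not_lt.1 hi)]
  set D := starMatchingDomSet k (psum d) n
  have hDn : ∀ m ∈ D, m < n := fun _ => lt_of_mem_starMatchingDomSet hn
  have hdom : DomSet (H.comap f) (D.attachFin hDn) := by
    intro v hv
    rw [mem_coe, mem_attachFin] at hv
    obtain ⟨u, hu, hadj⟩ := starMatchingDomSet_dominates hs hs0 hpar v.isLt hv
    exact ⟨⟨u, hDn u hu⟩, by rw [mem_coe, mem_attachFin]; exact hu, hadj⟩
  refine ⟨H.comap f, ⟨(starMatching_isAcyclic hs hs0).of_comap _, hdeg⟩, ?_⟩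
  calc domNum _ ≤ (D.attachFin hDn).card := domNum_le_card hdom
    _ = _ := by rw [card_attachFin, card_starMatchingDomSet]

theorem stmt5_general {n : ℕ} (d : Fin n → ℕ) (hd : Antitone d) (hpos : ∀ i, 1 ≤ d i)
    (heven : Even (∑ i, d i))
    (h1 : psum d (nGe2 d) ≤ nCount d 1) :
    gammaFmin d = nGe2 d + (nCount d 1 - psum d (nGe2 d)) / 2 := by
  have hn := nGe2_add_nCount_one hpos
  have hsum := sum_eq_psum_nGe2_add_nCount_one hd hpos
  have hpar : (n - (nGe2 d + psum d (nGe2 d))) % 2 = 0 := by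
    rw [Nat.even_iff] at heven
    omega
  obtain ⟨F, hF, hFdom⟩ := exists_isForestReal_domNum_le hd hpos (by omega) hpar
  refine gammaFmin_eq_of_le (fun F' hF' => ?_) hF (by omega)
  have hlow := card_sub_half_sum_le_domNum hF'.2
  rw [Fintype.card_fin] at hlow
  omega

theorem stmt5 {n : ℕ} (d : Fin n → ℕ) (hd : Antitone d) (hpos : ∀ i, 1 ≤ d i)
    (heven : Even (∑ i, d i)) (hsum : ∑ i, d i ≤ 2 * n - 2)
    (h1 : psum d (nGe2 d) ≤ nCount d 1) :
    gammaFmin d = nGe2 d + (nCount d 1 - psum d (nGe2 d)) / 2 :=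
  stmt5_general d hd hpos heven h1
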